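/- Let q be a prime power, n a positive integer, and C2 ⊆ C1 ⊆ F_q^n nested F_q-linear codes, and let J ⊆ {1,…,n} with complement J̄. For every F_q-linear code D with C2 ⊆ D ⊆ C1, the integer quantity dim P_J(D) − dim(C2 ∩ ker P_J̄) − (dim P_J̄(D) − dim(C2 ∩ ker P_J)) is at most dim P̃_J(ker P̃_J̄), and equality is attained for D = C2 + (C1 ∩ ker P_J̄). (This is the maximization of the coherent information over intermediate codes D.) -/

import Mathlib

set_option autoImplicit false

open Submodule Module

variable {F : Type*} [Field F] [Fintype F] {n : ℕ}

/-- `P_J`: the projection onto the coordinates in `J`. -/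
noncomputable def proj (J : Finset (Fin n)) : (Fin n → F) →ₗ[F] (J → F) :=
  LinearMap.funLeft F F (fun j => (j : Fin n))

/-- `P̃_J : C1/C2 → P_J(C1)/P_J(C2)`, the induced map sending `x + C2` to `P_J(x) + P_J(C2)`. -/
noncomputable def ptilde (C1 C2 : Submodule F (Fin n → F)) (J : Finset (Fin n)) :
    (↥C1 ⧸ C2.comap C1.subtype) →ₗ[F]
      (↥(C1.map (proj J)) ⧸ (C2.map (proj J)).comap (C1.map (proj J)).subtype) :=
  Submodule.mapQ _ _
    (LinearMap.codRestrict (C1.map (proj J)) ((proj J).comp C1.subtype)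
      (fun x => Submodule.mem_map_of_mem x.2))
    (fun _ hx => Submodule.mem_map_of_mem hx)


/-! Write `E_L = C2 + (C1 ∩ ker P_L)`. For `C2 ⊆ D ⊆ C1`, rank–nullity for `P_L` on `D` together
with the modular law `D ∩ E_L = C2 + (D ∩ ker P_L)` turns the quantity into
`dim (D ∩ E_J̄) − dim (D ∩ E_J)`, and `ker P̃_L = E_L / C2` turns `dim P̃_J(ker P̃_J̄)` into
`dim E_J̄ − dim (E_J̄ ∩ E_J)`. The inequality is then the lattice fact
`dim (D ∩ B) − dim (D ∩ A) ≤ dim B − dim (B ∩ A)`, an equality at `D = B`. -/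

section

variable {K V W : Type*} [DivisionRing K] [AddCommGroup V] [Module K V] [AddCommGroup W] [Module K W]

theorem Submodule.map_mkQ_inf_of_le {p S T : Submodule K V} (h : p ≤ T) :
    (S ⊓ T).map p.mkQ = S.map p.mkQ ⊓ T.map p.mkQ := by
  rw [map_inf_eq_map_inf_comap, comap_map_mkQ, sup_eq_right.mpr h]

variable [FiniteDimensional K V]

theorem Submodule.finrank_map_add_finrank_inf_ker (D : Submodule K V) (f : V →ₗ[K] W) :
    finrank K (D.map f) + finrank K ↥(D ⊓ LinearMap.ker f) = finrank K D := by
  have hker : (LinearMap.ker f).comap D.subtype = (D ⊓ LinearMap.ker f).comap D.subtype := by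
    rw [comap_inf, comap_subtype_self, top_inf_eq]
  rw [← (f.domRestrict D).finrank_range_add_finrank_ker, LinearMap.range_domRestrict,
    LinearMap.ker_domRestrict, hker, (comapSubtypeEquivOfLe inf_le_left).finrank_eq]

theorem Submodule.finrank_map_mkQ_add_finrank {p X : Submodule K V} (h : p ≤ X) :
    finrank K (X.map p.mkQ) + finrank K p = finrank K X := by
  have := X.finrank_map_add_finrank_inf_ker p.mkQ
  rwa [ker_mkQ, inf_eq_right.mpr h] at this

theorem Submodule.finrank_map_mkQ_comap_subtype_add_finrank {p X C : Submodule K V} (hp : p ≤ X)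
    (hX : X ≤ C) :
    finrank K ((X.comap C.subtype).map (p.comap C.subtype).mkQ) + finrank K p = finrank K X := by
  have := finrank_map_mkQ_add_finrank (comap_mono hp : p.comap C.subtype ≤ X.comap C.subtype)
  rwa [(comapSubtypeEquivOfLe (hp.trans hX)).finrank_eq,
    (comapSubtypeEquivOfLe hX).finrank_eq] at this

theorem Submodule.finrank_inf_add_finrank_inf_le (D A B : Submodule K V) :
    finrank K ↥(D ⊓ B) + finrank K ↥(B ⊓ A) ≤ finrank K B + finrank K ↥(D ⊓ A) := by
  have hsup : finrank K ↥(D ⊓ B ⊔ B ⊓ A) ≤ finrank K B :=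
    finrank_mono (sup_le inf_le_right inf_le_left)
  have hinf : finrank K ↥(D ⊓ B ⊓ (B ⊓ A)) ≤ finrank K ↥(D ⊓ A) :=
    finrank_mono fun x hx => ⟨hx.1.1, hx.2.2⟩
  have := finrank_sup_add_finrank_inf_eq (D ⊓ B) (B ⊓ A)
  omega

theorem Submodule.finrank_map_add_finrank_inf_sup_inf_ker {C1 C2 D : Submodule K V}
    (hD2 : C2 ≤ D) (hD1 : D ≤ C1) (f : V →ₗ[K] W) :
    finrank K (D.map f) + finrank K ↥(D ⊓ (C2 ⊔ C1 ⊓ LinearMap.ker f))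
      + finrank K ↥(C2 ⊓ LinearMap.ker f) = finrank K D + finrank K C2 := by
  have hmodular : D ⊓ (C2 ⊔ C1 ⊓ LinearMap.ker f) = C2 ⊔ D ⊓ LinearMap.ker f := by
    rw [inf_comm, sup_inf_assoc_of_le _ hD2, inf_right_comm, inf_eq_right.mpr hD1, inf_comm]
  have hC2 : C2 ⊓ (D ⊓ LinearMap.ker f) = C2 ⊓ LinearMap.ker f := by
    rw [← inf_assoc, inf_eq_left.mpr hD2]
  have := finrank_sup_add_finrank_inf_eq C2 (D ⊓ LinearMap.ker f)
  rw [hC2] at this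
  have := D.finrank_map_add_finrank_inf_ker f
  rw [hmodular]
  omega

end

omit [Fintype F] in
theorem ker_ptilde {C1 C2 : Submodule F (Fin n → F)} (h : C2 ≤ C1) (J : Finset (Fin n)) :
    LinearMap.ker (ptilde C1 C2 J)
      = ((C2 ⊔ C1 ⊓ LinearMap.ker (proj J)).comap C1.subtype).map (C2.comap C1.subtype).mkQ := by
  refine (ker_mapQ _ _ _ _).trans (congrArg _ ?_)
  ext x
  show proj J (x : Fin n → F) ∈ C2.map (proj J) ↔ (x : Fin n → F) ∈ C2 ⊔ C1 ⊓ LinearMap.ker (proj J)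
  simp only [mem_map, mem_sup, mem_inf, LinearMap.mem_ker]
  constructor
  · rintro ⟨c, hc, hcx⟩
    exact ⟨c, hc, x - c, ⟨sub_mem x.2 (h hc), by rw [map_sub, hcx, sub_self]⟩, add_sub_cancel c x⟩
  · rintro ⟨c, hc, k, ⟨-, hk⟩, hckx⟩
    exact ⟨c, hc, by rw [← hckx, map_add, hk, add_zero]⟩

omit [Fintype F] in
theorem finrank_map_ker_ptilde_add {C1 C2 : Submodule F (Fin n → F)} (h : C2 ≤ C1)
    (J L : Finset (Fin n)) :
    finrank F ((LinearMap.ker (ptilde C1 C2 L)).map (ptilde C1 C2 J))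
      + finrank F ↥((C2 ⊔ C1 ⊓ LinearMap.ker (proj L)) ⊓ (C2 ⊔ C1 ⊓ LinearMap.ker (proj J)))
      = finrank F ↥(C2 ⊔ C1 ⊓ LinearMap.ker (proj L)) := by
  have hle : ∀ M : Finset (Fin n), C2 ⊔ C1 ⊓ LinearMap.ker (proj M) ≤ C1 :=
    fun _ => sup_le h inf_le_left
  have hrank := (LinearMap.ker (ptilde C1 C2 L)).finrank_map_add_finrank_inf_ker (ptilde C1 C2 J)
  have hL : finrank F (LinearMap.ker (ptilde C1 C2 L)) + finrank F C2
      = finrank F ↥(C2 ⊔ C1 ⊓ LinearMap.ker (proj L)) := by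
    rw [ker_ptilde h]
    exact finrank_map_mkQ_comap_subtype_add_finrank le_sup_left (hle L)
  have hLJ : finrank F ↥(LinearMap.ker (ptilde C1 C2 L) ⊓ LinearMap.ker (ptilde C1 C2 J))
        + finrank F C2
      = finrank F ↥((C2 ⊔ C1 ⊓ LinearMap.ker (proj L)) ⊓ (C2 ⊔ C1 ⊓ LinearMap.ker (proj J))) := by
    rw [ker_ptilde h, ker_ptilde h, ← map_mkQ_inf_of_le (comap_mono le_sup_left), ← comap_inf]
    exact finrank_map_mkQ_comap_subtype_add_finrank (le_inf le_sup_left le_sup_left)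
      (inf_le_left.trans (hle L))
  omega

theorem coherent_information_max_general (C1 C2 : Submodule F (Fin n → F))
    (h : C2 ≤ C1) (J : Finset (Fin n)) :
    (∀ D : Submodule F (Fin n → F), C2 ≤ D → D ≤ C1 →
        (Module.finrank F ↥(D.map (proj J)) : ℤ)
            - Module.finrank F ↥(C2 ⊓ LinearMap.ker (proj Jᶜ))
            - ((Module.finrank F ↥(D.map (proj Jᶜ)) : ℤ)
                - Module.finrank F ↥(C2 ⊓ LinearMap.ker (proj J)))
          ≤ Module.finrank F ↥((LinearMap.ker (ptilde C1 C2 Jᶜ)).map (ptilde C1 C2 J)))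
      ∧ (Module.finrank F ↥((C2 ⊔ (C1 ⊓ LinearMap.ker (proj Jᶜ))).map (proj J)) : ℤ)
            - Module.finrank F ↥(C2 ⊓ LinearMap.ker (proj Jᶜ))
            - ((Module.finrank F ↥((C2 ⊔ (C1 ⊓ LinearMap.ker (proj Jᶜ))).map (proj Jᶜ)) : ℤ)
                - Module.finrank F ↥(C2 ⊓ LinearMap.ker (proj J)))
          = Module.finrank F ↥((LinearMap.ker (ptilde C1 C2 Jᶜ)).map (ptilde C1 C2 J)) := by
  have hrhs := finrank_map_ker_ptilde_add h J Jᶜ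
  refine ⟨fun D hD2 hD1 => ?_, ?_⟩
  · have hJ := finrank_map_add_finrank_inf_sup_inf_ker hD2 hD1 (proj J)
    have hJc := finrank_map_add_finrank_inf_sup_inf_ker hD2 hD1 (proj Jᶜ)
    have hlattice := finrank_inf_add_finrank_inf_le D (C2 ⊔ C1 ⊓ LinearMap.ker (proj J))
      (C2 ⊔ C1 ⊓ LinearMap.ker (proj Jᶜ))
    omega
  · have hE2 : C2 ≤ C2 ⊔ C1 ⊓ LinearMap.ker (proj Jᶜ) := le_sup_left
    have hE1 : C2 ⊔ C1 ⊓ LinearMap.ker (proj Jᶜ) ≤ C1 := sup_le h inf_le_left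
    have hJ := finrank_map_add_finrank_inf_sup_inf_ker hE2 hE1 (proj J)
    have hJc := finrank_map_add_finrank_inf_sup_inf_ker hE2 hE1 (proj Jᶜ)
    rw [inf_idem] at hJc
    omega

/-- Maximization of the coherent information over intermediate codes `C2 ⊆ D ⊆ C1`:
the quantity `dim P_J(D) − dim(C2 ∩ ker P_J̄) − (dim P_J̄(D) − dim(C2 ∩ ker P_J))` is
at most `dim P̃_J(ker P̃_J̄)`, with equality for `D = C2 + (C1 ∩ ker P_J̄)`. -/
theorem coherent_information_max (hn : 0 < n) (C1 C2 : Submodule F (Fin n → F))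
    (h : C2 ≤ C1) (J : Finset (Fin n)) :
    (∀ D : Submodule F (Fin n → F), C2 ≤ D → D ≤ C1 →
        (Module.finrank F ↥(D.map (proj J)) : ℤ)
            - Module.finrank F ↥(C2 ⊓ LinearMap.ker (proj Jᶜ))
            - ((Module.finrank F ↥(D.map (proj Jᶜ)) : ℤ)
                - Module.finrank F ↥(C2 ⊓ LinearMap.ker (proj J)))
          ≤ Module.finrank F ↥((LinearMap.ker (ptilde C1 C2 Jᶜ)).map (ptilde C1 C2 J)))
      ∧ (Module.finrank F ↥((C2 ⊔ (C1 ⊓ LinearMap.ker (proj Jᶜ))).map (proj J)) : ℤ)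
            - Module.finrank F ↥(C2 ⊓ LinearMap.ker (proj Jᶜ))
            - ((Module.finrank F ↥((C2 ⊔ (C1 ⊓ LinearMap.ker (proj Jᶜ))).map (proj Jᶜ)) : ℤ)
                - Module.finrank F ↥(C2 ⊓ LinearMap.ker (proj J)))
          = Module.finrank F ↥((LinearMap.ker (ptilde C1 C2 Jᶜ)).map (ptilde C1 C2 J)) :=
  coherent_information_max_general C1 C2 h J
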